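/- arXiv:2305.15449 — 3 statements merged into one kernel-verified Lean document; each statement's English description precedes it below -/
import Mathlib

section
/- Let N ≥ 3, p > 2, and let D, L > 0 with L ≥ sup_n ∫(A_∞ u_n² + B v_n² + |∇u_n|² + |∇v_n|² + u_n²|∇u_n|² + v_n²|∇v_n|²) and ∫|u_n|^α|v_n|^β ≥ D for all n. Set t̂ = (p L / D)^{1/(p-2)}, assumed > 1. Then for each n, I((u_n)_{t̂}, (v_n)_{t̂}) ≤ -L t̂^{N+2}/2 < 0. -/
/-!
Write `T = t̂^(N+2)`. The choice of `t̂` gives `t̂^(p-2) = pL/D`, so the negative term is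
`2 T t̂^(p-2) d / p = 2 T L d / D ≥ 2 T L`, while `t̂ > 1` bounds the positive part by
`T (a + b) / 2 ≤ T L / 2`.
-/

open Real

theorem scaled_energy_le {s T a b d p D L : ℝ} (hp : 0 < p) (hD : 0 < D) (hL : 0 ≤ L)
    (hT : 0 ≤ T) (hsT : s ≤ T) (ha : 0 ≤ a) (hab : a + b ≤ L) (hd : D ≤ d) :
    s / 2 * a + T / 2 * b - 2 * (T * (p * L / D)) / p * d ≤ -(L * T) / 2 := by
  have hsa : s * a ≤ T * a := mul_le_mul_of_nonneg_right hsT ha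
  have hTab : T * (a + b) ≤ T * L := mul_le_mul_of_nonneg_left hab hT
  have hdD : T * L ≤ T * L * (d / D) :=
    le_mul_of_one_le_right (mul_nonneg hT hL) ((one_le_div hD).mpr hd)
  have hneg : 2 * (T * (p * L / D)) / p * d = 2 * (T * L * (d / D)) := by
    field_simp
  rw [hneg]
  nlinarith

theorem stmt12_general (N : ℕ) (p : ℝ) (hp : 2 < p)
    (D L : ℝ) (hD : 0 < D) (hL : 0 < L)
    (a b d : ℕ → ℝ) (ha : ∀ n, 0 ≤ a n)
    (hQL : ∀ n, a n + b n ≤ L) (hd : ∀ n, D ≤ d n)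
    (that : ℝ) (hthat : that = (p * L / D) ^ (1 / (p - 2))) (hthat1 : 1 < that) :
    ∀ n, that ^ (N : ℝ) / 2 * a n + that ^ ((N : ℝ) + 2) / 2 * b n
        - 2 * that ^ ((N : ℝ) + p) / p * d n ≤ -(L * that ^ ((N : ℝ) + 2)) / 2 ∧
      -(L * that ^ ((N : ℝ) + 2)) / 2 < 0 := by
  intro n
  have ht : 0 < that := one_pos.trans hthat1
  have hpow : that ^ (p - 2) = p * L / D := by
    rw [hthat, one_div, rpow_inv_rpow (by positivity) (by linarith)]
  have hsplit : that ^ ((N : ℝ) + p) = that ^ ((N : ℝ) + 2) * (p * L / D) := by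
    rw [← hpow, ← rpow_add ht]
    ring_nf
  have hT : 0 < that ^ ((N : ℝ) + 2) := rpow_pos_of_pos ht _
  refine ⟨?_, by have := mul_pos hL hT; linarith⟩
  rw [hsplit]
  exact scaled_energy_le (by linarith) hD hL.le hT.le
    (rpow_le_rpow_of_exponent_le hthat1.le (by linarith)) (ha n) (hQL n) (hd n)

/-- Step 3 of Lemma 3.4, upper bound for the fibering maximizer:
with `aₙ = ∫(|∇uₙ|²+|∇vₙ|²)`, `bₙ = ∫(A(t̂x)uₙ²+Bvₙ²+uₙ²|∇uₙ|²+vₙ²|∇vₙ|²)`,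
`dₙ = ∫|uₙ|^α|vₙ|^β`, if `aₙ + bₙ ≤ L` (since `A ≤ A_∞`), `dₙ ≥ D` and
`t̂ = (pL/D)^{1/(p-2)} > 1`, then
`I((uₙ)_{t̂},(vₙ)_{t̂}) = (t̂^N/2)aₙ + (t̂^{N+2}/2)bₙ - (2t̂^{N+p}/p)dₙ ≤ -Lt̂^{N+2}/2 < 0`. -/
theorem stmt12 (N : ℕ) (hN : 3 ≤ N) (p : ℝ) (hp : 2 < p)
    (D L : ℝ) (hD : 0 < D) (hL : 0 < L)
    (a b d : ℕ → ℝ) (ha : ∀ n, 0 ≤ a n) (hb : ∀ n, 0 ≤ b n)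
    (hQL : ∀ n, a n + b n ≤ L) (hd : ∀ n, D ≤ d n)
    (that : ℝ) (hthat : that = (p * L / D) ^ (1 / (p - 2))) (hthat1 : 1 < that) :
    ∀ n, that ^ (N : ℝ) / 2 * a n + that ^ ((N : ℝ) + 2) / 2 * b n
        - 2 * that ^ ((N : ℝ) + p) / p * d n ≤ -(L * that ^ ((N : ℝ) + 2)) / 2 ∧
      -(L * that ^ ((N : ℝ) + 2)) / 2 < 0 :=
  stmt12_general N p hp D L hD hL a b d ha hQL hd that hthat hthat1
end

section
/- Let A : ℝ^N → ℝ be C¹ with A and ∇A(x)·x bounded, and suppose the map t ↦ I(u_t, v_t) with u_t(x) = t u(x/t) is defined for (u,v) ∈ X with all relevant integrals finite. Then h(t) = I(u_t, v_t) is C¹ on (0,∞) with h'(t) = (N/2)t^{N-1}∫(|∇u|²+|∇v|²) + ((N+2)/2)t^{N+1}∫(A(tx)u² + Bv² + u²|∇u|² + v²|∇v|²) + (t^{N+1}/2)∫∇A(tx)·(tx) u² - (2(N+α+β)/(α+β)) t^{N+α+β-1} ∫|u|^α|v|^β. In particular, h'(1) = G(u,v), where G is the Nehari–Pohožaev functional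 of the paper. -/
/-!
Substituting `x = t y`, the dilation `u_t(x) = t u(x/t)` satisfies `∇u_t(x) = ∇u(x/t)`, so
`h(t) = t^N/2 ∫(|∇u|²+|∇v|²) + t^(N+2)/2 ∫(A(ty)u² + Bv² + u²|∇u|² + v²|∇v|²)
  - 2/(α+β) t^(N+α+β) ∫|u|^α|v|^β`.
Apart from the powers of `t`, only `∫ A(ty)u²` depends on `t`. It is differentiated under the
integral sign: `d/dt A(ty) = ∇A(ty)·y = (∇A(ty)·ty)/t` is bounded by `‖∇A·x‖_∞ / t` thanks to
(A₂), which gives an integrable dominating function `C u²` near any `t₀ > 0`. Writing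
`t ∇A(ty)·y = ∇A(ty)·(ty)` turns the product rule into the stated formula, which at `t = 1`
is `G(u,v)`.
-/

open Real MeasureTheory Module

theorem hasDerivAt_fibering {K : ℝ → ℝ} {n a b c m K' t₀ : ℝ} (hK : HasDerivAt K K' t₀)
    (ht₀ : 0 < t₀) :
    HasDerivAt (fun t => 1 / 2 * t ^ n * a + 1 / 2 * t ^ (n + 2) * K t - c * t ^ m * b)
      (n / 2 * t₀ ^ (n - 1) * a + (n + 2) / 2 * t₀ ^ (n + 1) * K t₀ + t₀ ^ (n + 1) / 2 * (t₀ * K')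
        - c * m * t₀ ^ (m - 1) * b) t₀ := by
  have hn := hasDerivAt_rpow_const (x := t₀) (p := n) (.inl ht₀.ne')
  have hn2 := hasDerivAt_rpow_const (x := t₀) (p := n + 2) (.inl ht₀.ne')
  have hm := hasDerivAt_rpow_const (x := t₀) (p := m) (.inl ht₀.ne')
  rw [show n + 2 - 1 = n + 1 by ring] at hn2
  refine ((((hn.const_mul (1 / 2)).mul_const a).add ((hn2.const_mul (1 / 2)).mul hK)).sub
    ((hm.const_mul c).mul_const b)).congr_deriv ?_
  have hpow : t₀ ^ (n + 2) = t₀ ^ (n + 1) * t₀ := by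
    rw [← rpow_add_one ht₀.ne']
    ring_nf
  rw [hpow]
  ring

section

variable {E : Type*} [NormedAddCommGroup E] [NormedSpace ℝ E]

noncomputable def dilation (t : ℝ) (u : E → ℝ) (x : E) : ℝ := t * u (t⁻¹ • x)

noncomputable def energyDensity (A : E → ℝ) (B α β : ℝ) (w z : E → ℝ) (x : E) : ℝ :=
  1 / 2 * (‖fderiv ℝ w x‖ ^ 2 + ‖fderiv ℝ z x‖ ^ 2 + A x * w x ^ 2 + B * z x ^ 2
    + w x ^ 2 * ‖fderiv ℝ w x‖ ^ 2 + z x ^ 2 * ‖fderiv ℝ z x‖ ^ 2)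
    - 2 / (α + β) * (|w x| ^ α * |z x| ^ β)

theorem hasFDerivAt_dilation {u : E → ℝ} (hu : Differentiable ℝ u) {t : ℝ} (ht : t ≠ 0)
    (x : E) : HasFDerivAt (dilation t u) (fderiv ℝ u (t⁻¹ • x)) x := by
  have hscale : HasFDerivAt (fun x : E => t⁻¹ • x) (t⁻¹ • ContinuousLinearMap.id ℝ E) x :=
    (hasFDerivAt_id x).const_smul t⁻¹
  refine (((hu _).hasFDerivAt.comp x hscale).const_smul t).congr_fderiv ?_
  ext y
  simp [smul_smul, mul_inv_cancel₀ ht]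

theorem fderiv_dilation {u : E → ℝ} (hu : Differentiable ℝ u) {t : ℝ} (ht : t ≠ 0) (x : E) :
    fderiv ℝ (dilation t u) x = fderiv ℝ u (t⁻¹ • x) :=
  (hasFDerivAt_dilation hu ht x).fderiv

theorem energyDensity_dilation_smul {A u v : E → ℝ} {B α β t : ℝ} (hu : Differentiable ℝ u)
    (hv : Differentiable ℝ v) (ht : 0 < t) (y : E) :
    energyDensity A B α β (dilation t u) (dilation t v) (t • y) =
      1 / 2 * (‖fderiv ℝ u y‖ ^ 2 + ‖fderiv ℝ v y‖ ^ 2)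
        + t ^ 2 / 2 * (A (t • y) * u y ^ 2 + B * v y ^ 2 + u y ^ 2 * ‖fderiv ℝ u y‖ ^ 2
          + v y ^ 2 * ‖fderiv ℝ v y‖ ^ 2)
        - 2 / (α + β) * t ^ (α + β) * (|u y| ^ α * |v y| ^ β) := by
  have hpow : ∀ a b : ℝ, |t * a| ^ α * |t * b| ^ β = t ^ (α + β) * (|a| ^ α * |b| ^ β) := by
    intro a b
    rw [abs_mul, abs_mul, abs_of_pos ht, mul_rpow ht.le (abs_nonneg _),
      mul_rpow ht.le (abs_nonneg _), rpow_add ht]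
    ring
  simp only [energyDensity, fderiv_dilation hu ht.ne', fderiv_dilation hv ht.ne', dilation,
    hpow, smul_smul, inv_mul_cancel₀ ht.ne', one_smul]
  ring

theorem abs_fderiv_smul_apply_le {A : E → ℝ} {C t : ℝ}
    (hA : ∀ x, |fderiv ℝ A x x| ≤ C) (ht : 0 < t) (y : E) :
    |fderiv ℝ A (t • y) y| ≤ C / t := by
  have h := hA (t • y)
  rw [map_smul, smul_eq_mul, abs_mul, abs_of_pos ht] at h
  rw [le_div_iff₀ ht]
  linarith

section Parametric

variable [MeasurableSpace E] [OpensMeasurableSpace E] {μ : Measure E}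

theorem integrable_comp_smul_mul {A w : E → ℝ} {C : ℝ} (hA : Continuous A)
    (hAC : ∀ x, |A x| ≤ C) (hw : Integrable w μ) (t : ℝ) :
    Integrable (fun y => A (t • y) * w y) μ :=
  hw.bdd_mul (hA.comp (continuous_const_smul t)).aestronglyMeasurable
    (.of_forall fun y => hAC (t • y))

theorem hasDerivAt_integral_comp_smul_mul {A w : E → ℝ} {C t₀ : ℝ} (hA : ContDiff ℝ 1 A)
    (hA' : ∀ x, |fderiv ℝ A x x| ≤ C) (hw : Integrable w μ)
    (hint : Integrable (fun y => A (t₀ • y) * w y) μ) (ht₀ : 0 < t₀) :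
    HasDerivAt (fun t => ∫ y, A (t • y) * w y ∂μ) (∫ y, fderiv ℝ A (t₀ • y) y * w y ∂μ) t₀ := by
  have hball : Metric.ball t₀ (t₀ / 2) ⊆ Set.Ioi (t₀ / 2) := fun t ht => by
    rw [Metric.mem_ball, Real.dist_eq] at ht
    exact show t₀ / 2 < t by linarith [(abs_lt.1 ht).1]
  have hmeas : ∀ t : ℝ, AEStronglyMeasurable (fun y => A (t • y) * w y) μ := fun t =>
    (hA.continuous.comp (continuous_const_smul t)).aestronglyMeasurable.mul
      hw.aestronglyMeasurable
  have hmeas' : AEStronglyMeasurable (fun y => fderiv ℝ A (t₀ • y) y * w y) μ :=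
    (((hA.continuous_fderiv one_ne_zero).comp (continuous_const_smul t₀)).clm_apply
      continuous_id).aestronglyMeasurable.mul hw.aestronglyMeasurable
  have hbound : ∀ᵐ y ∂μ, ∀ t ∈ Metric.ball t₀ (t₀ / 2),
      ‖fderiv ℝ A (t • y) y * w y‖ ≤ C / (t₀ / 2) * ‖w y‖ := by
    refine .of_forall fun y t ht => ?_
    have ht' : t₀ / 2 < t := hball ht
    have hC : 0 ≤ C := (abs_nonneg _).trans (hA' 0)
    rw [norm_mul, Real.norm_eq_abs]
    gcongr
    calc |fderiv ℝ A (t • y) y| ≤ C / t := abs_fderiv_smul_apply_le hA' (by linarith) y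
      _ ≤ C / (t₀ / 2) := by gcongr
  have hdiff : ∀ᵐ y ∂μ, ∀ t ∈ Metric.ball t₀ (t₀ / 2),
      HasDerivAt (fun t => A (t • y) * w y) (fderiv ℝ A (t • y) y * w y) t := by
    refine .of_forall fun y t _ => ?_
    have hray : HasDerivAt (fun t : ℝ => t • y) y t := by
      simpa using (hasDerivAt_id t).smul_const y
    exact ((hA.differentiable one_ne_zero (t • y)).hasFDerivAt.comp_hasDerivAt t hray).mul_const _
  exact (hasDerivAt_integral_of_dominated_loc_of_deriv_le (Metric.ball_mem_nhds t₀ (by linarith))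
    (.of_forall hmeas) hint hmeas' hbound (hw.norm.const_mul _) hdiff).2

end Parametric

section Haar

variable [MeasurableSpace E] [BorelSpace E] [FiniteDimensional ℝ E] (μ : Measure E)
  [μ.IsAddHaarMeasure]

theorem integral_energyDensity_dilation {A u v : E → ℝ} {B α β t : ℝ}
    (hu : Differentiable ℝ u) (hv : Differentiable ℝ v)
    (hgrad : Integrable (fun y => ‖fderiv ℝ u y‖ ^ 2 + ‖fderiv ℝ v y‖ ^ 2) μ)
    (hpot : Integrable (fun y => A (t • y) * u y ^ 2 + B * v y ^ 2
      + u y ^ 2 * ‖fderiv ℝ u y‖ ^ 2 + v y ^ 2 * ‖fderiv ℝ v y‖ ^ 2) μ)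
    (hcoupling : Integrable (fun y => |u y| ^ α * |v y| ^ β) μ) (ht : 0 < t) :
    ∫ x, energyDensity A B α β (dilation t u) (dilation t v) x ∂μ =
      1 / 2 * t ^ (finrank ℝ E : ℝ) * (∫ y, ‖fderiv ℝ u y‖ ^ 2 + ‖fderiv ℝ v y‖ ^ 2 ∂μ)
      + 1 / 2 * t ^ ((finrank ℝ E : ℝ) + 2) * (∫ y, A (t • y) * u y ^ 2 + B * v y ^ 2
          + u y ^ 2 * ‖fderiv ℝ u y‖ ^ 2 + v y ^ 2 * ‖fderiv ℝ v y‖ ^ 2 ∂μ)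
      - 2 / (α + β) * t ^ ((finrank ℝ E : ℝ) + α + β) * ∫ y, |u y| ^ α * |v y| ^ β ∂μ := by
  have htn : t ^ finrank ℝ E ≠ 0 := pow_ne_zero _ ht.ne'
  -- substitute `x = t • y`
  rw [← mul_inv_cancel_left₀ htn (∫ x, _ ∂μ), ← smul_eq_mul _⁻¹,
    ← Measure.integral_comp_smul_of_nonneg μ _ t (hR := ht.le)]
  simp only [energyDensity_dilation_smul hu hv ht]
  rw [integral_sub ((hgrad.const_mul _).fun_add (hpot.const_mul _))
      (hcoupling.const_mul _),
    integral_add (hgrad.const_mul _) (hpot.const_mul _), integral_const_mul, integral_const_mul,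
    integral_const_mul]
  have hquad : t ^ ((finrank ℝ E : ℝ) + 2) = t ^ finrank ℝ E * t ^ 2 := by
    rw [rpow_add ht, rpow_two, rpow_natCast]
  have hcoup : t ^ ((finrank ℝ E : ℝ) + α + β) = t ^ finrank ℝ E * t ^ (α + β) := by
    rw [add_assoc, rpow_add ht, rpow_natCast]
  rw [hquad, hcoup, rpow_natCast]
  ring

theorem hasDerivAt_integral_energyDensity_dilation {A u v : E → ℝ} {B α β C C' t : ℝ} {n : ℕ}
    (hA : ContDiff ℝ 1 A) (hAC : ∀ x, |A x| ≤ C) (hAC' : ∀ x, |fderiv ℝ A x x| ≤ C')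
    (hu : Differentiable ℝ u) (hv : Differentiable ℝ v)
    (hgrad : Integrable (fun x => ‖fderiv ℝ u x‖ ^ 2 + ‖fderiv ℝ v x‖ ^ 2) μ)
    (hmass : Integrable (fun x => u x ^ 2 + v x ^ 2) μ)
    (hquartic : Integrable (fun x => u x ^ 2 * ‖fderiv ℝ u x‖ ^ 2
      + v x ^ 2 * ‖fderiv ℝ v x‖ ^ 2) μ)
    (hcoupling : Integrable (fun x => |u x| ^ α * |v x| ^ β) μ)
    (hn : finrank ℝ E = n) (ht : 0 < t) :
    HasDerivAt (fun s => ∫ x, energyDensity A B α β (dilation s u) (dilation s v) x ∂μ)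
      ((n : ℝ) / 2 * t ^ ((n : ℝ) - 1) * (∫ x, ‖fderiv ℝ u x‖ ^ 2 + ‖fderiv ℝ v x‖ ^ 2 ∂μ)
        + ((n : ℝ) + 2) / 2 * t ^ ((n : ℝ) + 1) * (∫ x, A (t • x) * u x ^ 2
            + B * v x ^ 2 + u x ^ 2 * ‖fderiv ℝ u x‖ ^ 2
            + v x ^ 2 * ‖fderiv ℝ v x‖ ^ 2 ∂μ)
        + t ^ ((n : ℝ) + 1) / 2 * (∫ x, fderiv ℝ A (t • x) (t • x) * u x ^ 2 ∂μ)
        - 2 * ((n : ℝ) + α + β) / (α + β) * t ^ ((n : ℝ) + α + β - 1)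
            * ∫ x, |u x| ^ α * |v x| ^ β ∂μ) t := by
  subst hn
  have hmu : AEStronglyMeasurable (fun x => u x ^ 2) μ :=
    (hu.continuous.pow 2).aestronglyMeasurable
  have hu2 : Integrable (fun x => u x ^ 2) μ := integrable_left_of_integrable_add_of_nonneg hmu
    (.of_forall fun _ => sq_nonneg _) (.of_forall fun _ => sq_nonneg _) hmass
  have hv2 : Integrable (fun x => v x ^ 2) μ := integrable_right_of_integrable_add_of_nonneg hmu
    (.of_forall fun _ => sq_nonneg _) (.of_forall fun _ => sq_nonneg _) hmass
  have hQ : ∀ s : ℝ, Integrable (fun x => A (s • x) * u x ^ 2) μ :=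
    integrable_comp_smul_mul hA.continuous hAC hu2
  have hR : Integrable (fun x => B * v x ^ 2
      + (u x ^ 2 * ‖fderiv ℝ u x‖ ^ 2 + v x ^ 2 * ‖fderiv ℝ v x‖ ^ 2)) μ :=
    (hv2.const_mul B).fun_add hquartic
  have hpot : ∀ s : ℝ, (fun x => A (s • x) * u x ^ 2 + B * v x ^ 2
      + u x ^ 2 * ‖fderiv ℝ u x‖ ^ 2 + v x ^ 2 * ‖fderiv ℝ v x‖ ^ 2)
      = fun x => A (s • x) * u x ^ 2 + (B * v x ^ 2
        + (u x ^ 2 * ‖fderiv ℝ u x‖ ^ 2 + v x ^ 2 * ‖fderiv ℝ v x‖ ^ 2)) :=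
    fun s => funext fun x => by ring
  have hpotDeriv : HasDerivAt (fun s => ∫ x, A (s • x) * u x ^ 2 + B * v x ^ 2
      + u x ^ 2 * ‖fderiv ℝ u x‖ ^ 2 + v x ^ 2 * ‖fderiv ℝ v x‖ ^ 2 ∂μ)
      (∫ x, fderiv ℝ A (t • x) x * u x ^ 2 ∂μ) t := by
    simp only [hpot, integral_add (hQ _) hR]
    exact (hasDerivAt_integral_comp_smul_mul hA hAC' hu2 (hQ t) ht).add_const _
  have hhom : ∫ x, fderiv ℝ A (t • x) (t • x) * u x ^ 2 ∂μ
      = t * ∫ x, fderiv ℝ A (t • x) x * u x ^ 2 ∂μ := by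
    rw [← integral_const_mul]
    simp only [map_smul, smul_eq_mul, mul_assoc]
  refine ((hasDerivAt_fibering hpotDeriv ht).congr_of_eventuallyEq
    (Filter.eventually_of_mem (Ioi_mem_nhds ht) fun s hs =>
      integral_energyDensity_dilation μ hu hv hgrad (hpot s ▸ (hQ s).fun_add hR) hcoupling hs)
    ).congr_deriv ?_
  rw [hhom]
  ring

end Haar

end

theorem stmt17_general (N : ℕ) (α β B : ℝ)
    (A : EuclideanSpace ℝ (Fin N) → ℝ) (hA : ContDiff ℝ 1 A)
    (hAbdd : ∃ C : ℝ, ∀ x, |A x| ≤ C)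
    (hA2 : ∃ C : ℝ, ∀ x, |fderiv ℝ A x x| ≤ C)
    (u v : EuclideanSpace ℝ (Fin N) → ℝ)
    (hu : Differentiable ℝ u) (hv : Differentiable ℝ v)
    (hi1 : Integrable (fun x => ‖fderiv ℝ u x‖ ^ 2 + ‖fderiv ℝ v x‖ ^ 2))
    (hi2 : Integrable (fun x => u x ^ 2 + v x ^ 2))
    (hi3 : Integrable (fun x => u x ^ 2 * ‖fderiv ℝ u x‖ ^ 2
            + v x ^ 2 * ‖fderiv ℝ v x‖ ^ 2))
    (hi4 : Integrable (fun x => |u x| ^ α * |v x| ^ β))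
    (I : (EuclideanSpace ℝ (Fin N) → ℝ) → (EuclideanSpace ℝ (Fin N) → ℝ) → ℝ)
    (hI : ∀ w z : EuclideanSpace ℝ (Fin N) → ℝ,
      I w z = ∫ x, ((1 / 2) * (‖fderiv ℝ w x‖ ^ 2 + ‖fderiv ℝ z x‖ ^ 2
        + A x * w x ^ 2 + B * z x ^ 2
        + w x ^ 2 * ‖fderiv ℝ w x‖ ^ 2 + z x ^ 2 * ‖fderiv ℝ z x‖ ^ 2)
        - 2 / (α + β) * (|w x| ^ α * |z x| ^ β)))
    (h : ℝ → ℝ)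
    (hh : ∀ t : ℝ, 0 < t →
      h t = I (fun x => t * u (t⁻¹ • x)) (fun x => t * v (t⁻¹ • x)))
    (G : ℝ)
    (hG : G = (N : ℝ) / 2 * (∫ x, ‖fderiv ℝ u x‖ ^ 2 + ‖fderiv ℝ v x‖ ^ 2)
      + ((N : ℝ) + 2) / 2 * (∫ x, A x * u x ^ 2 + B * v x ^ 2
          + u x ^ 2 * ‖fderiv ℝ u x‖ ^ 2 + v x ^ 2 * ‖fderiv ℝ v x‖ ^ 2)
      + (1 / 2) * (∫ x, fderiv ℝ A x x * u x ^ 2)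
      - 2 * ((N : ℝ) + α + β) / (α + β) * ∫ x, |u x| ^ α * |v x| ^ β) :
    (∀ t : ℝ, 0 < t → HasDerivAt h
      ((N : ℝ) / 2 * t ^ ((N : ℝ) - 1) * (∫ x, ‖fderiv ℝ u x‖ ^ 2 + ‖fderiv ℝ v x‖ ^ 2)
        + ((N : ℝ) + 2) / 2 * t ^ ((N : ℝ) + 1) * (∫ x, A (t • x) * u x ^ 2
            + B * v x ^ 2 + u x ^ 2 * ‖fderiv ℝ u x‖ ^ 2
            + v x ^ 2 * ‖fderiv ℝ v x‖ ^ 2)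
        + t ^ ((N : ℝ) + 1) / 2 * (∫ x, fderiv ℝ A (t • x) (t • x) * u x ^ 2)
        - 2 * ((N : ℝ) + α + β) / (α + β) * t ^ ((N : ℝ) + α + β - 1)
            * ∫ x, |u x| ^ α * |v x| ^ β) t) ∧
    deriv h 1 = G := by
  obtain ⟨C, hAC⟩ := hAbdd
  obtain ⟨C', hAC'⟩ := hA2
  have hderiv (t : ℝ) (ht : 0 < t) :=
    (hasDerivAt_integral_energyDensity_dilation volume (B := B) hA hAC hAC' hu hv hi1 hi2 hi3 hi4
      finrank_euclideanSpace_fin ht).congr_of_eventuallyEq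
      (Filter.eventually_of_mem (Ioi_mem_nhds ht) fun s hs => (hh s hs).trans (hI _ _))
  refine ⟨hderiv, ?_⟩
  rw [(hderiv 1 one_pos).deriv, hG]
  simp only [one_smul, one_rpow]
  ring

/-- the fibering map `h(t) = I(u_t,v_t)` is differentiable on `(0,∞)` with
the explicit derivative
`h'(t) = (N/2)t^{N-1}∫(|∇u|²+|∇v|²) + ((N+2)/2)t^{N+1}∫(A(tx)u²+Bv²+u²|∇u|²+v²|∇v|²)
 + (t^{N+1}/2)∫∇A(tx)·(tx)u² - (2(N+α+β)/(α+β))t^{N+α+β-1}∫|u|^α|v|^β`,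
and in particular `h'(1) = G(u,v)`, the Nehari–Pohožaev functional. -/
theorem stmt17 (N : ℕ) (hN : 3 ≤ N) (α β B : ℝ) (hα : 1 < α) (hβ : 1 < β) (hB : 0 < B)
    (A : EuclideanSpace ℝ (Fin N) → ℝ) (hA : ContDiff ℝ 1 A)
    (hAbdd : ∃ C : ℝ, ∀ x, |A x| ≤ C)
    (hA2 : ∃ C : ℝ, ∀ x, |fderiv ℝ A x x| ≤ C)
    (u v : EuclideanSpace ℝ (Fin N) → ℝ)
    (hu : Differentiable ℝ u) (hv : Differentiable ℝ v)
    (hi1 : Integrable (fun x => ‖fderiv ℝ u x‖ ^ 2 + ‖fderiv ℝ v x‖ ^ 2))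
    (hi2 : Integrable (fun x => u x ^ 2 + v x ^ 2))
    (hi3 : Integrable (fun x => u x ^ 2 * ‖fderiv ℝ u x‖ ^ 2
            + v x ^ 2 * ‖fderiv ℝ v x‖ ^ 2))
    (hi4 : Integrable (fun x => |u x| ^ α * |v x| ^ β))
    (I : (EuclideanSpace ℝ (Fin N) → ℝ) → (EuclideanSpace ℝ (Fin N) → ℝ) → ℝ)
    (hI : ∀ w z : EuclideanSpace ℝ (Fin N) → ℝ,
      I w z = ∫ x, ((1 / 2) * (‖fderiv ℝ w x‖ ^ 2 + ‖fderiv ℝ z x‖ ^ 2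
        + A x * w x ^ 2 + B * z x ^ 2
        + w x ^ 2 * ‖fderiv ℝ w x‖ ^ 2 + z x ^ 2 * ‖fderiv ℝ z x‖ ^ 2)
        - 2 / (α + β) * (|w x| ^ α * |z x| ^ β)))
    (h : ℝ → ℝ)
    (hh : ∀ t : ℝ, 0 < t →
      h t = I (fun x => t * u (t⁻¹ • x)) (fun x => t * v (t⁻¹ • x)))
    (G : ℝ)
    (hG : G = (N : ℝ) / 2 * (∫ x, ‖fderiv ℝ u x‖ ^ 2 + ‖fderiv ℝ v x‖ ^ 2)
      + ((N : ℝ) + 2) / 2 * (∫ x, A x * u x ^ 2 + B * v x ^ 2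
          + u x ^ 2 * ‖fderiv ℝ u x‖ ^ 2 + v x ^ 2 * ‖fderiv ℝ v x‖ ^ 2)
      + (1 / 2) * (∫ x, fderiv ℝ A x x * u x ^ 2)
      - 2 * ((N : ℝ) + α + β) / (α + β) * ∫ x, |u x| ^ α * |v x| ^ β) :
    (∀ t : ℝ, 0 < t → HasDerivAt h
      ((N : ℝ) / 2 * t ^ ((N : ℝ) - 1) * (∫ x, ‖fderiv ℝ u x‖ ^ 2 + ‖fderiv ℝ v x‖ ^ 2)
        + ((N : ℝ) + 2) / 2 * t ^ ((N : ℝ) + 1) * (∫ x, A (t • x) * u x ^ 2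
            + B * v x ^ 2 + u x ^ 2 * ‖fderiv ℝ u x‖ ^ 2
            + v x ^ 2 * ‖fderiv ℝ v x‖ ^ 2)
        + t ^ ((N : ℝ) + 1) / 2 * (∫ x, fderiv ℝ A (t • x) (t • x) * u x ^ 2)
        - 2 * ((N : ℝ) + α + β) / (α + β) * t ^ ((N : ℝ) + α + β - 1)
            * ∫ x, |u x| ^ α * |v x| ^ β) t) ∧
    deriv h 1 = G :=
  stmt17_general N α β B A hA hAbdd hA2 u v hu hv hi1 hi2 hi3 hi4 I hI h hh G hG
end

section
/- Let N ≥ 3, p = α+β ∈ (2, 4N/(N-2)), and A₀, B > 0 constants. Suppose (u,v) ∈ X satisfies the constraint ((N+2)/2)∫(A₀u² + Bv² + u²|∇u|² + v²|∇v|²) ≤ (2(N+p)/p)∫|u|^α|v|^β. Then, combining Hölder, Young, the L²–L^{4N/(N-2)} interpolation inequality and Young's inequality with appropriate weights, there exists C > 0 (depending on N, α, β, A₀, B) such that ((N+2)/2)∫(u²|∇u|² + v²|∇v|²) ≤ C ∫(|u|^{4N/(N-2)} + |v|^{4N/(N-2)}). -/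
/-!
Young's inequality bounds `|u|^α |v|^β` by `|u|^p + |v|^p`, and since `2 < p ≤ 4N/(N-2) = q`,
rescaling `t^p ≤ t^2 + t^q` gives `|u|^p ≤ ε u² + C_ε |u|^q` for every `ε > 0`. Choosing `ε`
small in terms of `A₀`, `B`, the `L²` part of the right-hand side of the constraint is absorbed
by the terms `A₀ ∫ u² + B ∫ v²` on its left.
-/

open Real MeasureTheory

namespace Real

lemma rpow_le_rpow_add_rpow {a p q t : ℝ} (hap : a ≤ p) (hpq : p ≤ q) (hp : p ≠ 0)
    (ht : 0 ≤ t) : t ^ p ≤ t ^ a + t ^ q := by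
  rcases ht.eq_or_lt with rfl | ht
  · rw [zero_rpow hp]
    positivity
  rcases le_or_gt t 1 with ht1 | ht1
  · linarith [rpow_le_rpow_of_exponent_ge ht ht1 hap, rpow_nonneg ht.le q]
  · linarith [rpow_le_rpow_of_exponent_le ht1.le hpq, rpow_nonneg ht.le a]

/-- Rescaling `t = M x` in `rpow_le_rpow_add_rpow`, with `M ^ (a - p) = ε`. -/
lemma exists_rpow_le_mul_rpow_add_mul_rpow {a p q ε : ℝ} (hap : a < p) (hpq : p ≤ q)
    (hp : p ≠ 0) (hε : 0 < ε) :
    ∃ C > 0, ∀ x, 0 ≤ x → x ^ p ≤ ε * x ^ a + C * x ^ q := by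
  set M := ε ^ (a - p)⁻¹
  have hM : 0 < M := rpow_pos_of_pos hε _
  have hMε : M ^ (a - p) = ε := by
    rw [← rpow_mul hε.le, inv_mul_cancel₀ (sub_ne_zero.2 hap.ne), rpow_one]
  refine ⟨M ^ (q - p), rpow_pos_of_pos hM _, fun x hx => ?_⟩
  have key := rpow_le_rpow_add_rpow hap.le hpq hp (mul_nonneg hM.le hx)
  rw [mul_rpow hM.le hx, mul_rpow hM.le hx, mul_rpow hM.le hx] at key
  rw [← hMε, rpow_sub hM, rpow_sub hM, div_mul_eq_mul_div, div_mul_eq_mul_div, ← add_div,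
    le_div_iff₀ (rpow_pos_of_pos hM p)]
  linarith

lemma rpow_mul_rpow_le_rpow_add_rpow {x y α β : ℝ} (hx : 0 ≤ x) (hy : 0 ≤ y)
    (hα : 0 ≤ α) (hβ : 0 ≤ β) : x ^ α * y ^ β ≤ x ^ (α + β) + y ^ (α + β) := by
  rcases (add_nonneg hα hβ).eq_or_lt with hαβ | hαβ
  · obtain ⟨rfl, rfl⟩ : α = 0 ∧ β = 0 := ⟨by linarith, by linarith⟩
    norm_num
  have hm : 0 ≤ max x y := hx.trans (le_max_left _ _)
  calc x ^ α * y ^ β ≤ max x y ^ α * max x y ^ β := by gcongr <;> simp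
    _ = max x y ^ (α + β) := (rpow_add' hm hαβ.ne').symm
    _ ≤ x ^ (α + β) + y ^ (α + β) := by
      rcases max_choice x y with h | h <;> rw [h]
      · exact le_add_of_nonneg_right (rpow_nonneg hy _)
      · exact le_add_of_nonneg_left (rpow_nonneg hx _)

end Real

lemma exists_integral_rpow_mul_rpow_le {X : Type*} [MeasurableSpace X] {α β q ε : ℝ}
    (hα : 0 ≤ α) (hβ : 0 ≤ β) (hp : 2 < α + β) (hq : α + β ≤ q) (hε : 0 < ε) :
    ∃ C > 0, ∀ (μ : Measure X) (u v : X → ℝ),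
      Integrable (fun x => u x ^ 2) μ → Integrable (fun x => v x ^ 2) μ →
      Integrable (fun x => |u x| ^ q) μ → Integrable (fun x => |v x| ^ q) μ →
      Integrable (fun x => |u x| ^ α * |v x| ^ β) μ →
      ∫ x, |u x| ^ α * |v x| ^ β ∂μ
        ≤ ε * (∫ x, u x ^ 2 ∂μ + ∫ x, v x ^ 2 ∂μ) + C * ∫ x, |u x| ^ q + |v x| ^ q ∂μ := by
  obtain ⟨C, hC, hinterp⟩ :=
    exists_rpow_le_mul_rpow_add_mul_rpow (a := 2) hp hq (by linarith) hε
  refine ⟨C, hC, fun μ u v hu hv huq hvq hab => ?_⟩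
  have hpt : ∀ x, |u x| ^ α * |v x| ^ β
      ≤ ε * (u x ^ 2 + v x ^ 2) + C * (|u x| ^ q + |v x| ^ q) := fun x => by
    have hyoung := rpow_mul_rpow_le_rpow_add_rpow (abs_nonneg (u x)) (abs_nonneg (v x)) hα hβ
    have hu' := hinterp _ (abs_nonneg (u x))
    have hv' := hinterp _ (abs_nonneg (v x))
    rw [rpow_two, sq_abs] at hu' hv'
    linarith
  calc ∫ x, |u x| ^ α * |v x| ^ β ∂μ
      ≤ ∫ x, ε * (u x ^ 2 + v x ^ 2) + C * (|u x| ^ q + |v x| ^ q) ∂μ :=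
        integral_mono hab (by fun_prop) hpt
    _ = _ := by
      rw [integral_add (by fun_prop) (by fun_prop), integral_const_mul, integral_const_mul,
        integral_add hu hv]

theorem stmt18_general (N : ℕ) (α β : ℝ) (hα : 1 < α) (hβ : 1 < β)
    (p : ℝ) (hpdef : p = α + β) (hp : 2 < p) (hp' : p < 4 * N / ((N : ℝ) - 2))
    (A₀ B : ℝ) (hA₀ : 0 < A₀) (hB : 0 < B) :
    ∃ C : ℝ, 0 < C ∧
      ∀ u v : EuclideanSpace ℝ (Fin N) → ℝ,
        Differentiable ℝ u → Differentiable ℝ v →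
        Integrable (fun x => u x ^ 2) → Integrable (fun x => v x ^ 2) →
        Integrable (fun x => u x ^ 2 * ‖fderiv ℝ u x‖ ^ 2) →
        Integrable (fun x => v x ^ 2 * ‖fderiv ℝ v x‖ ^ 2) →
        Integrable (fun x => |u x| ^ α * |v x| ^ β) →
        Integrable (fun x => |u x| ^ p) → Integrable (fun x => |v x| ^ p) →
        Integrable (fun x => |u x| ^ (4 * N / ((N : ℝ) - 2))) →
        Integrable (fun x => |v x| ^ (4 * N / ((N : ℝ) - 2))) →
        ((N : ℝ) + 2) / 2 * (∫ x, A₀ * u x ^ 2 + B * v x ^ 2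
            + u x ^ 2 * ‖fderiv ℝ u x‖ ^ 2 + v x ^ 2 * ‖fderiv ℝ v x‖ ^ 2)
          ≤ 2 * ((N : ℝ) + p) / p * ∫ x, |u x| ^ α * |v x| ^ β →
        ((N : ℝ) + 2) / 2 * (∫ x, u x ^ 2 * ‖fderiv ℝ u x‖ ^ 2
            + v x ^ 2 * ‖fderiv ℝ v x‖ ^ 2)
          ≤ C * ∫ x, |u x| ^ (4 * N / ((N : ℝ) - 2))
              + |v x| ^ (4 * N / ((N : ℝ) - 2)) := by
  subst hpdef
  set c : ℝ := ((N : ℝ) + 2) / 2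
  set K : ℝ := 2 * ((N : ℝ) + (α + β)) / (α + β)
  have hK : 0 < K := by positivity
  obtain ⟨C, hC, hchain⟩ := exists_integral_rpow_mul_rpow_le (X := EuclideanSpace ℝ (Fin N))
    (ε := c * min A₀ B / K) (by linarith) (by linarith) hp hp'.le (by positivity)
  refine ⟨K * C, by positivity, fun u v _ _ hu hv hwu hwv hab _ _ huq hvq hcon => ?_⟩
  have hlp := hchain volume u v hu hv huq hvq hab
  rw [integral_add (by fun_prop) hwv, integral_add (by fun_prop) hwu,
    integral_add (by fun_prop) (by fun_prop), integral_const_mul, integral_const_mul] at hcon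
  rw [integral_add hwu hwv]
  have hKε : K * (c * min A₀ B / K) = c * min A₀ B := by field_simp
  have hc : 0 ≤ c := by positivity
  have hu2 : c * min A₀ B * ∫ x, u x ^ 2 ≤ c * A₀ * ∫ x, u x ^ 2 :=
    mul_le_mul_of_nonneg_right (mul_le_mul_of_nonneg_left (min_le_left _ _) hc)
      (integral_nonneg fun x => sq_nonneg (u x))
  have hv2 : c * min A₀ B * ∫ x, v x ^ 2 ≤ c * B * ∫ x, v x ^ 2 :=
    mul_le_mul_of_nonneg_right (mul_le_mul_of_nonneg_left (min_le_right _ _) hc)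
      (integral_nonneg fun x => sq_nonneg (v x))
  have hKlp := mul_le_mul_of_nonneg_left hlp hK.le
  rw [mul_add, ← mul_assoc, hKε, ← mul_assoc] at hKlp
  linarith

/-- chain of inequalities in Lemma 2.3: there is a constant `C > 0`
depending only on `N, α, β, A₀, B` such that for every `(u,v)` satisfying the
constraint inequality
`((N+2)/2)∫(A₀u²+Bv²+u²|∇u|²+v²|∇v|²) ≤ (2(N+p)/p)∫|u|^α|v|^β`,
one has `((N+2)/2)∫(u²|∇u|²+v²|∇v|²) ≤ C∫(|u|^{4N/(N-2)}+|v|^{4N/(N-2)})`. -/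
theorem stmt18 (N : ℕ) (hN : 3 ≤ N) (α β : ℝ) (hα : 1 < α) (hβ : 1 < β)
    (p : ℝ) (hpdef : p = α + β) (hp : 2 < p) (hp' : p < 4 * N / ((N : ℝ) - 2))
    (A₀ B : ℝ) (hA₀ : 0 < A₀) (hB : 0 < B) :
    ∃ C : ℝ, 0 < C ∧
      ∀ u v : EuclideanSpace ℝ (Fin N) → ℝ,
        Differentiable ℝ u → Differentiable ℝ v →
        Integrable (fun x => u x ^ 2) → Integrable (fun x => v x ^ 2) →
        Integrable (fun x => u x ^ 2 * ‖fderiv ℝ u x‖ ^ 2) →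
        Integrable (fun x => v x ^ 2 * ‖fderiv ℝ v x‖ ^ 2) →
        Integrable (fun x => |u x| ^ α * |v x| ^ β) →
        Integrable (fun x => |u x| ^ p) → Integrable (fun x => |v x| ^ p) →
        Integrable (fun x => |u x| ^ (4 * N / ((N : ℝ) - 2))) →
        Integrable (fun x => |v x| ^ (4 * N / ((N : ℝ) - 2))) →
        ((N : ℝ) + 2) / 2 * (∫ x, A₀ * u x ^ 2 + B * v x ^ 2
            + u x ^ 2 * ‖fderiv ℝ u x‖ ^ 2 + v x ^ 2 * ‖fderiv ℝ v x‖ ^ 2)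
          ≤ 2 * ((N : ℝ) + p) / p * ∫ x, |u x| ^ α * |v x| ^ β →
        ((N : ℝ) + 2) / 2 * (∫ x, u x ^ 2 * ‖fderiv ℝ u x‖ ^ 2
            + v x ^ 2 * ‖fderiv ℝ v x‖ ^ 2)
          ≤ C * ∫ x, |u x| ^ (4 * N / ((N : ℝ) - 2))
              + |v x| ^ (4 * N / ((N : ℝ) - 2)) :=
  stmt18_general N α β hα hβ p hpdef hp hp' A₀ B hA₀ hB
end
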